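/- Let 𝔄₁, 𝔄₂ be hyperassignments with 𝔄₁ ≡ 𝔄₂, χ a quantifier prefix, and α ∈ {EA, AE}. Then nevl^α(𝔄₁,χ) ≡ evl^α(𝔄₂,χ); that is, the normal evolution and the evolution of equivalent hyperassignments along the same prefix are equivalent. (Appendix proposition on normal evolution.) -/

import Mathlib

namespace GFG

/-- Temporal valuations. -/
abbrev Val : Type := ℕ → Bool

/-- Assignments over a type `AP` of atomic propositions. -/
abbrev Asg (AP : Type*) : Type _ := AP → Val

section Hyper

variable {X : Type*}

/-- A hyperassignment: a nonempty set of subsets not containing `∅`. -/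
def IsHyp (𝔄 : Set (Set X)) : Prop := 𝔄 ≠ ∅ ∧ ∅ ∉ 𝔄

/-- A choice function for `𝔄`. -/
def IsChoice (𝔄 : Set (Set X)) (ϑ : Set X → X) : Prop := ∀ W ∈ 𝔄, ϑ W ∈ W

/-- The dual hyperassignment. -/
def hdual (𝔄 : Set (Set X)) : Set (Set X) :=
  { Y | ∃ ϑ : Set X → X, IsChoice 𝔄 ϑ ∧ Y = ϑ '' 𝔄 }

/-- The preorder `⊑` on hyperassignments. -/
def hle (𝔄₁ 𝔄₂ : Set (Set X)) : Prop := ∀ W₁ ∈ 𝔄₁, ∃ W₂ ∈ 𝔄₂, W₂ ⊆ W₁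

/-- The equivalence `≡` on hyperassignments. -/
def heqv (𝔄₁ 𝔄₂ : Set (Set X)) : Prop := hle 𝔄₁ 𝔄₂ ∧ hle 𝔄₂ 𝔄₁

/-- `par 𝔄`: partitions of `𝔄` into two disjoint parts. -/
def par (𝔄 : Set (Set X)) : Set (Set (Set X) × Set (Set X)) :=
  { pr | pr.1 ∪ pr.2 = 𝔄 ∧ Disjoint pr.1 pr.2 }

end Hyper

variable {AP : Type*}

/-- `a₁ ≈_p^{>k} a₂`. -/
def ApproxGT (p : AP) (k : ℕ) (a₁ a₂ : Asg AP) : Prop :=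
  (∀ q, q ≠ p → a₁ q = a₂ q) ∧ ∀ t ≤ k, a₁ p t = a₂ p t

/-- `a₁ ≈_p^{≥k} a₂`. -/
def ApproxGE (p : AP) (k : ℕ) (a₁ a₂ : Asg AP) : Prop :=
  (∀ q, q ≠ p → a₁ q = a₂ q) ∧ ∀ t < k, a₁ p t = a₂ p t

/-- Quantifier specifications `ς = (B,S)`. -/
abbrev Spec (AP : Type*) := Set AP × Set AP

/-- A `ς`-functor. -/
def IsSpecFunctor (ς : Spec AP) (F : Asg AP → Val) : Prop :=
  (∀ (k : ℕ) (a₁ a₂ : Asg AP), (∃ p ∈ ς.1, ApproxGT p k a₁ a₂) → F a₁ k = F a₂ k) ∧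
  (∀ (k : ℕ) (a₁ a₂ : Asg AP), (∃ p ∈ ς.2, ApproxGE p k a₁ a₂) → F a₁ k = F a₂ k)

variable [DecidableEq AP]

/-- `ext(a,F,p)`. -/
def extAsg (a : Asg AP) (F : Asg AP → Val) (p : AP) : Asg AP :=
  Function.update a p (F a)

/-- `ext(W,F,p)`. -/
def extSet (W : Set (Asg AP)) (F : Asg AP → Val) (p : AP) : Set (Asg AP) :=
  (fun a => extAsg a F p) '' W

/-- `ext_ς(𝔄,p)`. -/
def extSpec (ς : Spec AP) (𝔄 : Set (Set (Asg AP))) (p : AP) : Set (Set (Asg AP)) :=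
  { Y | ∃ W ∈ 𝔄, ∃ F : Asg AP → Val, IsSpecFunctor ς F ∧ Y = extSet W F p }

/-- Alternation flags. -/
inductive Flag : Type
  | EA : Flag
  | AE : Flag
  deriving DecidableEq

/-- The dual flag. -/
def Flag.dual : Flag → Flag
  | .EA => .AE
  | .AE => .EA

/-- GFG-QPTL formulas (LTL formulas abstracted as arbitrary sets of assignments). -/
inductive Formula (AP : Type*) : Type _ where
  | atom : Set (Asg AP) → Formula AP
  | neg : Formula AP → Formula AP
  | conj : Formula AP → Formula AP → Formula AP
  | disj : Formula AP → Formula AP → Formula AP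
  | ex : AP → Spec AP → Formula AP → Formula AP
  | all : AP → Spec AP → Formula AP → Formula AP

/-- The alternating Hodges semantics `𝔄 ⊨^α φ`. -/
def Sat : Formula AP → Flag → Set (Set (Asg AP)) → Prop
  | .atom Ψ, .EA, 𝔄 => ∃ W ∈ 𝔄, W ⊆ Ψ
  | .atom Ψ, .AE, 𝔄 => ∀ W ∈ 𝔄, W ∩ Ψ ≠ ∅
  | .neg φ, α, 𝔄 => ¬ Sat φ α.dual 𝔄
  | .conj φ₁ φ₂, .EA, 𝔄 =>
      ∀ pr ∈ par 𝔄, (pr.1 ≠ ∅ ∧ Sat φ₁ .EA pr.1) ∨ (pr.2 ≠ ∅ ∧ Sat φ₂ .EA pr.2)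
  | .conj φ₁ φ₂, .AE, 𝔄 =>
      ∀ pr ∈ par (hdual 𝔄), (pr.1 ≠ ∅ ∧ Sat φ₁ .EA pr.1) ∨ (pr.2 ≠ ∅ ∧ Sat φ₂ .EA pr.2)
  | .disj φ₁ φ₂, .AE, 𝔄 =>
      ∃ pr ∈ par 𝔄, (pr.1 ≠ ∅ → Sat φ₁ .AE pr.1) ∧ (pr.2 ≠ ∅ → Sat φ₂ .AE pr.2)
  | .disj φ₁ φ₂, .EA, 𝔄 =>
      ∃ pr ∈ par (hdual 𝔄), (pr.1 ≠ ∅ → Sat φ₁ .AE pr.1) ∧ (pr.2 ≠ ∅ → Sat φ₂ .AE pr.2)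
  | .ex p ς φ, .EA, 𝔄 => Sat φ .EA (extSpec ς 𝔄 p)
  | .ex p ς φ, .AE, 𝔄 => Sat φ .EA (extSpec ς (hdual 𝔄) p)
  | .all p ς φ, .AE, 𝔄 => Sat φ .AE (extSpec ς 𝔄 p)
  | .all p ς φ, .EA, 𝔄 => Sat φ .AE (extSpec ς (hdual 𝔄) p)

/-- Quantifier symbols. -/
inductive Quant : Type
  | qex : Quant
  | qall : Quant
  deriving DecidableEq

/-- Quantifier prefixes: finite lists of triples `(Q, ς, p)`. -/
abbrev QPrefix (AP : Type*) := List (Quant × Spec AP × AP)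

/-- `χφ`: the formula obtained by prefixing `φ` with the quantifiers of `χ`. -/
def applyPrefix : QPrefix AP → Formula AP → Formula AP
  | [], φ => φ
  | (Quant.qex, ς, p) :: χ, φ => .ex p ς (applyPrefix χ φ)
  | (Quant.qall, ς, p) :: χ, φ => .all p ς (applyPrefix χ φ)

/-- `Q` is `α`-coherent iff `(Q,α) ∈ {(∃,EA),(∀,AE)}`. -/
def coherent : Quant → Flag → Bool
  | .qex, .EA => true
  | .qall, .AE => true
  | _, _ => false

/-- The evolution `evl^α(𝔄,χ)` of a hyperassignment along a quantifier prefix. -/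
def evl (α : Flag) : Set (Set (Asg AP)) → QPrefix AP → Set (Set (Asg AP))
  | 𝔄, [] => 𝔄
  | 𝔄, (Q, ς, p) :: χ =>
      evl α (if coherent Q α then extSpec ς 𝔄 p else hdual (extSpec ς (hdual 𝔄) p)) χ

/-- The normal one-step extension used by the normal evolution in the
non-coherent case. -/
def nstep (ς : Spec AP) (𝔄 : Set (Set (Asg AP))) (p : AP) : Set (Set (Asg AP)) :=
  { Y | ∃ sel : (Asg AP → Val) → Set (Asg AP),
        (∀ F : Asg AP → Val, IsSpecFunctor ς F → sel F ∈ 𝔄) ∧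
        Y = ⋃ F ∈ { F : Asg AP → Val | IsSpecFunctor ς F }, extSet (sel F) F p }

/-- The normal evolution `nevl^α(𝔄,χ)`. -/
def nevl (α : Flag) : Set (Set (Asg AP)) → QPrefix AP → Set (Set (Asg AP))
  | 𝔄, [] => 𝔄
  | 𝔄, (Q, ς, p) :: χ =>
      nevl α (if coherent Q α then extSpec ς 𝔄 p else nstep ς 𝔄 p) χ

/-!
Both evolutions are monotone for `⊑` step by step, so the claim reduces to a single
non-coherent step, where `nstep ς 𝔄 p ≡ dual (ext_ς (dual 𝔄) p)`. That equivalence is a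
duality: a set contains a member of `dual 𝔅` iff it meets every member of `𝔅`, and it
contains a member of `𝔄` as soon as it meets every member of `dual 𝔄`.
-/

section Duality

variable {X : Type*}

theorem hle_trans {𝔄₁ 𝔄₂ 𝔄₃ : Set (Set X)} (h₁₂ : hle 𝔄₁ 𝔄₂) (h₂₃ : hle 𝔄₂ 𝔄₃) :
    hle 𝔄₁ 𝔄₃ := fun W₁ hW₁ =>
  let ⟨W₂, hW₂, h₂₁⟩ := h₁₂ W₁ hW₁
  let ⟨W₃, hW₃, h₃₂⟩ := h₂₃ W₂ hW₂
  ⟨W₃, hW₃, h₃₂.trans h₂₁⟩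

theorem heqv_trans {𝔄₁ 𝔄₂ 𝔄₃ : Set (Set X)} (h₁₂ : heqv 𝔄₁ 𝔄₂) (h₂₃ : heqv 𝔄₂ 𝔄₃) :
    heqv 𝔄₁ 𝔄₃ :=
  ⟨hle_trans h₁₂.1 h₂₃.1, hle_trans h₂₃.2 h₁₂.2⟩

theorem exists_mem_hdual_subset_iff [Nonempty X] {𝔅 : Set (Set X)} {Z : Set X} :
    (∃ V ∈ hdual 𝔅, V ⊆ Z) ↔ ∀ B ∈ 𝔅, (B ∩ Z).Nonempty := by
  classical
  constructor
  · rintro ⟨_, ⟨ϑ, hϑ, rfl⟩, hZ⟩ B hB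
    exact ⟨ϑ B, hϑ B hB, hZ ⟨B, hB, rfl⟩⟩
  · intro hmeet
    choose ϑ hϑ using hmeet
    let ϑ' : Set X → X := fun B => if hB : B ∈ 𝔅 then ϑ B hB else Classical.arbitrary X
    refine ⟨ϑ' '' 𝔅, ⟨ϑ', fun B hB => ?_, rfl⟩, ?_⟩
    · simpa [ϑ', hB] using (hϑ B hB).1
    · rintro _ ⟨B, hB, rfl⟩
      simpa [ϑ', hB] using (hϑ B hB).2

theorem exists_mem_subset_of_forall_hdual_inter_nonempty [Nonempty X] {𝔄 : Set (Set X)}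
    {Z : Set X} (hmeet : ∀ V ∈ hdual 𝔄, (V ∩ Z).Nonempty) : ∃ W ∈ 𝔄, W ⊆ Z := by
  by_contra! hnot
  obtain ⟨V, hV, hVZ⟩ := exists_mem_hdual_subset_iff.2 fun W hW =>
    Set.sdiff_nonempty.2 (hnot W hW)
  obtain ⟨a, haV, haZ⟩ := hmeet V hV
  exact hVZ haV haZ

end Duality

section Step

variable {ς : Spec AP} {p : AP}

theorem extSpec_mono {𝔄₁ 𝔄₂ : Set (Set (Asg AP))} (h : hle 𝔄₁ 𝔄₂) :
    hle (extSpec ς 𝔄₁ p) (extSpec ς 𝔄₂ p) := by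
  rintro _ ⟨W₁, hW₁, F, hF, rfl⟩
  obtain ⟨W₂, hW₂, hW₂₁⟩ := h W₁ hW₁
  exact ⟨extSet W₂ F p, ⟨W₂, hW₂, F, hF, rfl⟩, Set.image_mono hW₂₁⟩

theorem nstep_mono {𝔄₁ 𝔄₂ : Set (Set (Asg AP))} (h : hle 𝔄₁ 𝔄₂) :
    hle (nstep ς 𝔄₁ p) (nstep ς 𝔄₂ p) := by
  rintro _ ⟨sel₁, hsel₁, rfl⟩
  have : ∀ F, ∃ W₂, IsSpecFunctor ς F → W₂ ∈ 𝔄₂ ∧ W₂ ⊆ sel₁ F := fun F => by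
    by_cases hF : IsSpecFunctor ς F
    · obtain ⟨W₂, hW₂, hW₂₁⟩ := h _ (hsel₁ F hF)
      exact ⟨W₂, fun _ => ⟨hW₂, hW₂₁⟩⟩
    · exact ⟨∅, fun hF' => absurd hF' hF⟩
  choose sel₂ hsel₂ using this
  refine ⟨_, ⟨sel₂, fun F hF => (hsel₂ F hF).1, rfl⟩, ?_⟩
  exact Set.biUnion_mono subset_rfl fun F hF => Set.image_mono (hsel₂ F hF).2

theorem nstep_hle_hdual_extSpec_hdual (𝔄 : Set (Set (Asg AP))) :
    hle (nstep ς 𝔄 p) (hdual (extSpec ς (hdual 𝔄) p)) := by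
  rintro _ ⟨sel, hsel, rfl⟩
  refine exists_mem_hdual_subset_iff.2 ?_
  rintro _ ⟨_, ⟨ϑ, hϑ, rfl⟩, F, hF, rfl⟩
  refine ⟨extAsg (ϑ (sel F)) F p, ⟨ϑ (sel F), ⟨sel F, hsel F hF, rfl⟩, rfl⟩, ?_⟩
  exact Set.mem_biUnion hF ⟨ϑ (sel F), hϑ _ (hsel F hF), rfl⟩

theorem hdual_extSpec_hdual_hle_nstep (𝔄 : Set (Set (Asg AP))) :
    hle (hdual (extSpec ς (hdual 𝔄) p)) (nstep ς 𝔄 p) := by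
  intro Z hZ
  have hmeet := exists_mem_hdual_subset_iff.1 ⟨Z, hZ, subset_rfl⟩
  have : ∀ F, ∃ W, IsSpecFunctor ς F → W ∈ 𝔄 ∧ extSet W F p ⊆ Z := fun F => by
    by_cases hF : IsSpecFunctor ς F
    · obtain ⟨W, hW, hWZ⟩ := exists_mem_subset_of_forall_hdual_inter_nonempty
        (Z := (extAsg · F p) ⁻¹' Z) fun V hV => by
          obtain ⟨_, ⟨a, ha, rfl⟩, haZ⟩ := hmeet _ ⟨V, hV, F, hF, rfl⟩
          exact ⟨a, ha, haZ⟩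
      exact ⟨W, fun _ => ⟨hW, Set.image_subset_iff.2 hWZ⟩⟩
    · exact ⟨∅, fun hF' => absurd hF' hF⟩
  choose sel hsel using this
  exact ⟨_, ⟨sel, fun F hF => (hsel F hF).1, rfl⟩, Set.iUnion₂_subset fun F hF => (hsel F hF).2⟩

end Step

theorem nevl_equiv_evl_general (𝔄₁ 𝔄₂ : Set (Set (Asg AP)))
    (h : heqv 𝔄₁ 𝔄₂)
    (χ : QPrefix AP) (α : Flag) :
    heqv (nevl α 𝔄₁ χ) (evl α 𝔄₂ χ) := by
  induction χ generalizing 𝔄₁ 𝔄₂ with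
  | nil => exact h
  | cons q χ ih =>
    obtain ⟨Q, ς, p⟩ := q
    apply ih
    by_cases hc : coherent Q α
    · simpa only [if_pos hc] using ⟨extSpec_mono h.1, extSpec_mono h.2⟩
    · simp only [if_neg hc]
      exact heqv_trans ⟨nstep_mono h.1, nstep_mono h.2⟩
        ⟨nstep_hle_hdual_extSpec_hdual 𝔄₂, hdual_extSpec_hdual_hle_nstep 𝔄₂⟩

/-- Normal evolution and evolution of equivalent hyperassignments along the
same prefix are equivalent. -/
theorem nevl_equiv_evl (𝔄₁ 𝔄₂ : Set (Set (Asg AP)))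
    (h₁ : IsHyp 𝔄₁) (h₂ : IsHyp 𝔄₂) (h : heqv 𝔄₁ 𝔄₂)
    (χ : QPrefix AP) (α : Flag) :
    heqv (nevl α 𝔄₁ χ) (evl α 𝔄₂ χ) :=
  nevl_equiv_evl_general 𝔄₁ 𝔄₂ h χ α

end GFG
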